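/- arXiv:2007.01896 — 2 statements merged into one kernel-verified Lean document; each statement's English description precedes it below -/
import Mathlib

section
/- (Regime D reaches equilibrium in one step) For b = 3, the update map is idempotent, t_3 ∘ t_3 = t_3; equivalently, the image of the full state set {0,1,...,63} under t_3 equals the set of fixed points of t_3, namely {0, 23, 29, 31, 43, 46, 47, 53, 55, 58, 59, 61, 62, 63}. -/
/-- Von Neumann neighbourhoods on the 2×3 toroidal lattice.
Index `i : Fin 6` represents cell `i+1`, so `N(1)={2,3,5}` becomes `nbrs 0 = {1,2,4}`, etc. -/
def nbrs : Fin 6 → Finset (Fin 6)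
  | 0 => {1, 2, 4}
  | 1 => {0, 3, 5}
  | 2 => {0, 3, 4}
  | 3 => {1, 2, 5}
  | 4 => {0, 2, 5}
  | 5 => {1, 3, 4}

lemma nbrs_nonempty (i : Fin 6) : (nbrs i).Nonempty := by
  fin_cases i <;> simp [nbrs]

/-- Pairwise payoff to the first argument; `true` = cooperate, `false` = defect. -/
def pay (b : ℝ) : Bool → Bool → ℝ
  | false, false => 1
  | false, true  => b
  | true,  false => 0
  | true,  true  => 3

/-- Net payoff of cell `i` in state `σ`. -/
def payoff (b : ℝ) (σ : Fin 6 → Bool) (i : Fin 6) : ℝ :=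
  ∑ j ∈ nbrs i, pay b (σ i) (σ j)

/- Synchronous update map `t_b` on states: if the best payoff `m` among the
neighbours of cell `i` satisfies `m ≤ P_b(σ,i)` the cell keeps its strategy;
otherwise it cooperates iff some maximally-paid neighbour cooperates. -/
open scoped Classical in
noncomputable def update (b : ℝ) (σ : Fin 6 → Bool) : Fin 6 → Bool := fun i =>
  let m := (nbrs i).sup' (nbrs_nonempty i) fun j => payoff b σ j
  if m ≤ payoff b σ i then σ i
  else if ∃ j ∈ nbrs i, payoff b σ j = m ∧ σ j = true then true else false

/-- Decode an integer `0 ≤ n < 64` into a state: cell 1 is the most significant bit,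
bit value 1 = cooperate. -/
def dec (n : ℕ) : Fin 6 → Bool := fun i => n.testBit (5 - i.val)

/-- Encode a state as an integer via `n = Σ β(i)·2^(6−i)`. -/
def enc (σ : Fin 6 → Bool) : ℕ := ∑ i : Fin 6, if σ i then 2 ^ (5 - i.val) else 0

/-- The update map `t_b` acting on integer-coded states. -/
noncomputable def T (b : ℝ) (n : ℕ) : ℕ := enc (update b (dec n))

/-!
At an integer temptation `b` all payoffs are natural numbers, and the update rule only compares
payoffs, so `update b` agrees with the same rule computed in `ℕ`. There every comparison is
decidable, and idempotence of `t_3` and its fixed points are checked on all 64 states.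
-/

def payNat (b : ℕ) : Bool → Bool → ℕ
  | false, false => 1
  | false, true  => b
  | true,  false => 0
  | true,  true  => 3

def payoffNat (b : ℕ) (σ : Fin 6 → Bool) (i : Fin 6) : ℕ :=
  ∑ j ∈ nbrs i, payNat b (σ i) (σ j)

def updateNat (b : ℕ) (σ : Fin 6 → Bool) : Fin 6 → Bool := fun i =>
  let m := (nbrs i).sup' (nbrs_nonempty i) fun j => payoffNat b σ j
  if m ≤ payoffNat b σ i then σ i
  else if ∃ j ∈ nbrs i, payoffNat b σ j = m ∧ σ j = true then true else false

lemma pay_natCast (b : ℕ) (x y : Bool) : pay b x y = payNat b x y := by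
  cases x <;> cases y <;> simp [pay, payNat]

lemma payoff_natCast (b : ℕ) (σ : Fin 6 → Bool) (i : Fin 6) :
    payoff b σ i = payoffNat b σ i := by
  simp [payoff, payoffNat, pay_natCast]

lemma update_natCast (b : ℕ) : update b = updateNat b := by
  funext σ i
  simp only [update, updateNat, payoff_natCast, ← Nat.cast_finsetSup', Nat.cast_le, Nat.cast_inj]

theorem stmt12 :
    update 3 ∘ update 3 = update 3 ∧
    (Finset.range 64).image (T 3) = (Finset.range 64).filter (fun n => T 3 n = n) ∧
    (Finset.range 64).filter (fun n => T 3 n = n)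
      = ({0, 23, 29, 31, 43, 46, 47, 53, 55, 58, 59, 61, 62, 63} : Finset ℕ) := by
  have hupdate : update 3 = updateNat 3 := by exact_mod_cast update_natCast 3
  have hT : T 3 = fun n => enc (updateNat 3 (dec n)) := funext fun n => by rw [T, hupdate]
  rw [hupdate, hT]
  refine ⟨?_, ?_, ?_⟩ <;> decide
end

section
/- (Immunity to single-defector invasion in the weak dilemma) For b = 3, every state in which exactly one cell defects (i.e. each of the states 31, 47, 55, 59, 61, 62) is a fixed point of the update map t_3, whereas for every b > 3 no state with exactly one defecting cell is a fixed point of t_b. -/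
/-!
When only cell `i` defects, the defector earns `3 * b`, its three neighbours earn `6` and the two
remaining cooperators earn `9`. At `b = 3` the defector's `9` ties the best cooperators, so it keeps
defecting; each of its neighbours also sees a cooperator earning `9` (one not adjacent to `i`), so it
keeps cooperating. For `b > 3` the defector strictly out-earns every cooperator, so its neighbours
imitate it.
-/

lemma card_nbrs (i : Fin 6) : (nbrs i).card = 3 := by
  fin_cases i <;> rfl

lemma notMem_nbrs_self (i : Fin 6) : i ∉ nbrs i := by
  fin_cases i <;> decide

lemma mem_nbrs_comm {i j : Fin 6} (h : j ∈ nbrs i) : i ∈ nbrs j := by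
  revert h; revert i j; decide

lemma ne_of_mem_nbrs {i j : Fin 6} (h : j ∈ nbrs i) : j ≠ i := by
  rintro rfl; exact notMem_nbrs_self j h

lemma exists_mem_nbrs_notMem_nbrs {i k : Fin 6} (hk : k ∈ nbrs i) :
    ∃ l ∈ nbrs k, l ≠ i ∧ i ∉ nbrs l := by
  revert hk; revert i k; decide

section update

variable {b : ℝ} {σ : Fin 6 → Bool} {i l : Fin 6}

lemma sup'_payoff_eq (hl : l ∈ nbrs i) (hmax : ∀ j ∈ nbrs i, payoff b σ j ≤ payoff b σ l) :
    (nbrs i).sup' (nbrs_nonempty i) (payoff b σ) = payoff b σ l :=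
  le_antisymm (Finset.sup'_le _ _ hmax) (Finset.le_sup' _ hl)

lemma update_eq_self (h : ∀ j ∈ nbrs i, payoff b σ j ≤ payoff b σ i) : update b σ i = σ i :=
  if_pos (Finset.sup'_le _ _ h)

lemma update_eq_true (hl : l ∈ nbrs i) (hσl : σ l = true) (hlt : payoff b σ i < payoff b σ l)
    (hmax : ∀ j ∈ nbrs i, payoff b σ j ≤ payoff b σ l) : update b σ i = true := by
  have hm := sup'_payoff_eq hl hmax
  simp only [update, hm, not_le.2 hlt, if_false]
  exact if_pos ⟨l, hl, rfl, hσl⟩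

lemma update_eq_false (hl : l ∈ nbrs i) (hlt : payoff b σ i < payoff b σ l)
    (hmax : ∀ j ∈ nbrs i, payoff b σ j ≤ payoff b σ l)
    (hcoop : ∀ j ∈ nbrs i, σ j = true → payoff b σ j < payoff b σ l) :
    update b σ i = false := by
  have hm := sup'_payoff_eq hl hmax
  simp only [update, hm, not_le.2 hlt, if_false]
  exact if_neg fun ⟨j, hj, hpj, hσj⟩ => (hcoop j hj hσj).ne hpj

end update

def soleDefector (i : Fin 6) : Fin 6 → Bool := fun k => decide (k ≠ i)

@[simp]
lemma soleDefector_self (i : Fin 6) : soleDefector i i = false := by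
  simp [soleDefector]

lemma soleDefector_of_ne {i k : Fin 6} (h : k ≠ i) : soleDefector i k = true := by
  simp [soleDefector, h]

lemma eq_soleDefector_of_existsUnique {σ : Fin 6 → Bool} (h : ∃! i, σ i = false) :
    ∃ i, σ = soleDefector i := by
  obtain ⟨i, hi, huniq⟩ := h
  refine ⟨i, funext fun k => ?_⟩
  by_cases hk : k = i
  · rw [hk, hi, soleDefector_self]
  · rw [soleDefector_of_ne hk]
    cases hσk : σ k
    · exact absurd (huniq k hσk) hk
    · rfl

section payoff

variable (b : ℝ) {i k : Fin 6}

lemma payoff_soleDefector_self : payoff b (soleDefector i) i = 3 * b := by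
  rw [payoff, Finset.sum_congr rfl fun j hj => by
    rw [soleDefector_self, soleDefector_of_ne (ne_of_mem_nbrs hj), pay]]
  rw [Finset.sum_const, card_nbrs, nsmul_eq_mul]
  norm_num

lemma payoff_soleDefector_of_mem_nbrs (hk : i ∈ nbrs k) : payoff b (soleDefector i) k = 6 := by
  rw [payoff, ← Finset.add_sum_erase _ _ hk, soleDefector_self,
    soleDefector_of_ne (ne_of_mem_nbrs (mem_nbrs_comm hk)),
    Finset.sum_congr rfl fun j hj => by rw [soleDefector_of_ne (Finset.ne_of_mem_erase hj), pay],
    Finset.sum_const, Finset.card_erase_of_mem hk, card_nbrs]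
  norm_num [pay]

lemma payoff_soleDefector_of_notMem_nbrs (hki : k ≠ i) (hk : i ∉ nbrs k) :
    payoff b (soleDefector i) k = 9 := by
  rw [payoff, Finset.sum_congr rfl fun j hj => by
    rw [soleDefector_of_ne hki, soleDefector_of_ne (ne_of_mem_of_not_mem hj hk), pay]]
  rw [Finset.sum_const, card_nbrs]
  norm_num

lemma payoff_soleDefector_le_nine (hki : k ≠ i) : payoff b (soleDefector i) k ≤ 9 := by
  by_cases hk : i ∈ nbrs k
  · rw [payoff_soleDefector_of_mem_nbrs b hk]; norm_num
  · rw [payoff_soleDefector_of_notMem_nbrs b hki hk]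

end payoff

lemma update_three_soleDefector (i : Fin 6) : update 3 (soleDefector i) = soleDefector i := by
  have hmax : ∀ k, payoff 3 (soleDefector i) k ≤ 9 := fun k => by
    by_cases hki : k = i
    · rw [hki, payoff_soleDefector_self]; norm_num
    · exact payoff_soleDefector_le_nine 3 hki
  funext k
  by_cases hki : k = i
  · subst hki
    refine update_eq_self fun j hj => ?_
    rw [payoff_soleDefector_of_mem_nbrs 3 (mem_nbrs_comm hj), payoff_soleDefector_self]
    norm_num
  by_cases hk : i ∈ nbrs k
  · obtain ⟨l, hl, hli, hil⟩ := exists_mem_nbrs_notMem_nbrs (mem_nbrs_comm hk)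
    have hl9 := payoff_soleDefector_of_notMem_nbrs 3 hli hil
    rw [soleDefector_of_ne hki]
    refine update_eq_true hl (soleDefector_of_ne hli) ?_ fun j _ => hl9 ▸ hmax j
    rw [hl9, payoff_soleDefector_of_mem_nbrs 3 hk]
    norm_num
  · exact update_eq_self fun j _ => payoff_soleDefector_of_notMem_nbrs 3 hki hk ▸ hmax j

lemma update_soleDefector_ne (b : ℝ) (hb : 3 < b) (i : Fin 6) :
    update b (soleDefector i) ≠ soleDefector i := by
  obtain ⟨j, hj⟩ := nbrs_nonempty i
  have hji := ne_of_mem_nbrs hj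
  have hlt : ∀ k, k ≠ i → payoff b (soleDefector i) k < payoff b (soleDefector i) i := fun k hk => by
    rw [payoff_soleDefector_self]; linarith [payoff_soleDefector_le_nine b hk]
  have hle : ∀ k, payoff b (soleDefector i) k ≤ payoff b (soleDefector i) i := fun k => by
    by_cases hki : k = i
    · rw [hki]
    · exact (hlt k hki).le
  have hupd : update b (soleDefector i) j = false :=
    update_eq_false (mem_nbrs_comm hj) (hlt j hji) (fun k _ => hle k)
      fun k _ hk => hlt k fun hki => by simp [hki] at hk
  intro h
  rw [h, soleDefector_of_ne hji] at hupd
  exact Bool.noConfusion hupd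

lemma enc_dec_of_lt {n : ℕ} (hn : n < 64) : enc (dec n) = n := by
  revert n; decide

theorem stmt13 :
    (∀ n ∈ ({31, 47, 55, 59, 61, 62} : Finset ℕ), T 3 n = n) ∧
    (∀ b : ℝ, 3 < b → ∀ σ : Fin 6 → Bool, (∃! i : Fin 6, σ i = false) →
      update b σ ≠ σ) := by
  refine ⟨fun n hn => ?_, fun b hb σ hσ => ?_⟩
  · have hn64 : n < 64 := by revert n; decide
    obtain ⟨i, hi⟩ : ∃ i, dec n = soleDefector i := by revert n; decide
    rw [T, hi, update_three_soleDefector, ← hi, enc_dec_of_lt hn64]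
  · obtain ⟨i, rfl⟩ := eq_soleDefector_of_existsUnique hσ
    exact update_soleDefector_ne b hb i
end
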